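/- arXiv:1708.09640 — 2 statements merged into one kernel-verified Lean document; each statement's English description precedes it below -/
import Mathlib

section
/- Let P_k = 𝓛_k + V_k (k = 1,2) be two Schrödinger operators on ℝ^d as in the context, with λ_k* their generalized principal eigenvalues. Assume: a₁ = a₂ and b₁ = b₂ outside a compact set K ⊂ ℝ^d; V₂ ≥ V₁ outside a compact set; V₂(x) − V₁(x) → 0 as |x| → ∞; P₁ − λ₁* is critical in ℝ^d with ground state Ψ₁*; λ₂* ≤ λ₁*; and there exist a C² function Ψ with Ψ⁺ not identically zero and C > 0 such that 𝓛₂Ψ + V₂Ψ ≥ λ₁*Ψ on ℝ^d and Ψ⁺ ≤ C Ψ₁* on ℝ^d. Then λ₁* = λ₂*. -/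
open Metric Set Filter

noncomputable section

/-- `ℝ^d` as a Euclidean space. -/
abbrev Euc (d : ℕ) := EuclideanSpace ℝ (Fin d)

/-- First partial derivative `∂u/∂xᵢ`. -/
def pd {d : ℕ} (u : Euc d → ℝ) (i : Fin d) (x : Euc d) : ℝ :=
  fderiv ℝ u x (EuclideanSpace.single i 1)

/-- Second partial derivative `∂²u/∂xᵢ∂xⱼ`. -/
def pd2 {d : ℕ} (u : Euc d → ℝ) (i j : Fin d) (x : Euc d) : ℝ :=
  fderiv ℝ (fun y => pd u j y) x (EuclideanSpace.single i 1)

/-- The second-order operator `𝓛u = Σ aᶦʲ ∂ᵢⱼu + Σ bᶦ ∂ᵢu`. -/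
def Lop {d : ℕ} (a : Euc d → Matrix (Fin d) (Fin d) ℝ) (b : Euc d → Euc d)
    (u : Euc d → ℝ) (x : Euc d) : ℝ :=
  (∑ i, ∑ j, a x i j * pd2 u i j x) + ∑ i, b x i * pd u i x

/-- Frobenius norm of a matrix. -/
def frob {d : ℕ} (m : Matrix (Fin d) (Fin d) ℝ) : ℝ :=
  Real.sqrt (∑ i, ∑ j, (m i j) ^ 2)

/-- The quadratic form `⟨ξ, m ξ⟩`. -/
def quadForm {d : ℕ} (m : Matrix (Fin d) (Fin d) ℝ) (ξ : Euc d) : ℝ :=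
  ∑ i, ∑ j, m i j * ξ i * ξ j

/-- Local Hölder continuity on a set. -/
def LocallyHolderOn {E F : Type*} [PseudoMetricSpace E] [PseudoMetricSpace F]
    (f : E → F) (s : Set E) : Prop :=
  ∀ x ∈ s, ∃ (C r : NNReal), 0 < r ∧ r ≤ 1 ∧ ∃ ε > 0, HolderOnWith C r f (Metric.ball x ε ∩ s)

/-- Local Hölder continuity. -/
def LocallyHolder {E F : Type*} [PseudoMetricSpace E] [PseudoMetricSpace F] (f : E → F) : Prop :=
  LocallyHolderOn f Set.univ

/-- The set of `λ ∈ ℝ` admitting a positive C² supersolution of `𝓛φ + Vφ ≤ λφ` on `D`. -/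
def supersolutions {d : ℕ} (a : Euc d → Matrix (Fin d) (Fin d) ℝ) (b : Euc d → Euc d)
    (V : Euc d → ℝ) (D : Set (Euc d)) : Set ℝ :=
  {lam | ∃ φ : Euc d → ℝ, (∀ x ∈ D, 0 < φ x) ∧ ContDiffOn ℝ 2 φ D ∧
    ∀ x ∈ D, Lop a b φ x + V x * φ x ≤ lam * φ x}

/-- The generalized principal eigenvalue `λ*(𝓛,V)` on `D`. -/
def lamStar {d : ℕ} (a : Euc d → Matrix (Fin d) (Fin d) ℝ) (b : Euc d → Euc d)
    (V : Euc d → ℝ) (D : Set (Euc d)) : ℝ :=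
  sInf (supersolutions a b V D)

/-- `λ*(𝓛,V)` is finite: the defining set is nonempty and bounded below. -/
def lamStarFinite {d : ℕ} (a : Euc d → Matrix (Fin d) (Fin d) ℝ) (b : Euc d → Euc d)
    (V : Euc d → ℝ) (D : Set (Euc d)) : Prop :=
  (supersolutions a b V D).Nonempty ∧ BddBelow (supersolutions a b V D)

/-- A ground state of `𝓛 + W` in the open connected set `D`: a positive C² solution of
minimal growth at infinity. -/
def IsGroundState {d : ℕ} (a : Euc d → Matrix (Fin d) (Fin d) ℝ) (b : Euc d → Euc d)
    (W : Euc d → ℝ) (u : Euc d → ℝ) (D : Set (Euc d)) : Prop :=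
  (∀ x ∈ D, 0 < u x) ∧ ContDiffOn ℝ 2 u D ∧ (∀ x ∈ D, Lop a b u x + W x * u x = 0) ∧
  ∀ K : Set (Euc d), IsCompact K → K ⊆ D →
    ∀ v : Euc d → ℝ, ContDiffOn ℝ 2 v (D \ K) → (∀ x ∈ D \ K, 0 < v x) →
      (∀ x ∈ D \ K, Lop a b v x + W x * v x ≤ 0) →
      ∃ K' : Set (Euc d), IsCompact K' ∧ K ⊆ K' ∧ K' ⊆ D ∧
        ∃ κ > 0, ∀ x ∈ D \ K', κ * u x ≤ v x

/-- Membership in `C₀⁺(ℝ^d)`: continuous, nonnegative, not identically zero, vanishing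
at infinity. -/
def C0plus {d : ℕ} (h : Euc d → ℝ) : Prop :=
  Continuous h ∧ (∀ x, 0 ≤ h x) ∧ (∃ x, h x ≠ 0) ∧ Tendsto h (cocompact (Euc d)) (nhds 0)

/-- `λ*` is strictly monotone at `V` on the right. -/
def StrictMonoRight {d : ℕ} (a : Euc d → Matrix (Fin d) (Fin d) ℝ) (b : Euc d → Euc d)
    (V : Euc d → ℝ) : Prop :=
  ∀ h : Euc d → ℝ, C0plus h →
    lamStar a b V Set.univ < lamStar a b (fun x => V x + h x) Set.univ

/-- `λ*` is strictly monotone at `V` (on both sides). -/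
def StrictMonoAt {d : ℕ} (a : Euc d → Matrix (Fin d) (Fin d) ℝ) (b : Euc d → Euc d)
    (V : Euc d → ℝ) : Prop :=
  ∀ h : Euc d → ℝ, C0plus h →
    lamStar a b (fun x => V x - h x) Set.univ < lamStar a b V Set.univ ∧
    lamStar a b V Set.univ < lamStar a b (fun x => V x + h x) Set.univ

/-- Standing assumptions (A1)–(A3) with `b` Borel measurable and locally bounded. -/
structure StandingB {d : ℕ} (a : Euc d → Matrix (Fin d) (Fin d) ℝ) (b : Euc d → Euc d) : Prop where
  posdef : ∀ x, (a x).PosDef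
  aLip : ∀ R > 0, ∃ C > 0, ∀ x y : Euc d, ‖x‖ ≤ R → ‖y‖ ≤ R →
    frob (a x - a y) ≤ C * ‖x - y‖
  bMeas : Measurable b
  bLocBdd : ∀ R > 0, ∃ C, ∀ x : Euc d, ‖x‖ ≤ R → ‖b x‖ ≤ C
  nondeg : ∀ R > 0, ∃ C > 0, ∀ x : Euc d, ‖x‖ ≤ R → ∀ ξ : Euc d,
    C⁻¹ * ‖ξ‖ ^ 2 ≤ quadForm (a x) ξ
  growth : ∃ C₀ > 0, ∀ x : Euc d,
    max (∑ i, b x i * x i) 0 + frob (a x) ≤ C₀ * (1 + ‖x‖ ^ 2)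

/-- Standing assumptions (A1)–(A3) with `b` locally Hölder continuous. -/
structure StandingH {d : ℕ} (a : Euc d → Matrix (Fin d) (Fin d) ℝ) (b : Euc d → Euc d) : Prop where
  posdef : ∀ x, (a x).PosDef
  aLip : ∀ R > 0, ∃ C > 0, ∀ x y : Euc d, ‖x‖ ≤ R → ‖y‖ ≤ R →
    frob (a x - a y) ≤ C * ‖x - y‖
  bHolder : LocallyHolder b
  nondeg : ∀ R > 0, ∃ C > 0, ∀ x : Euc d, ‖x‖ ≤ R → ∀ ξ : Euc d,
    C⁻¹ * ‖ξ‖ ^ 2 ≤ quadForm (a x) ξ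
  growth : ∃ C₀ > 0, ∀ x : Euc d,
    max (∑ i, b x i * x i) 0 + frob (a x) ≤ C₀ * (1 + ‖x‖ ^ 2)

/-! Suppose `λ₂* < λ₁*` and take `λ` in between with a positive supersolution `φ` of
`𝓛₂ + V₂ - λ`. Off a compact set `𝓛₁ = 𝓛₂` and `V₁ ≤ V₂`, so every positive supersolution of
`𝓛₂ + V₂ - λ₁*` is one of `𝓛₁ + V₁ - λ₁*` there and, `Ψ₁*` being a ground state, dominates a
multiple of `Ψ₁* ≥ Ψ / C` near infinity. Applied to `φ`, a strict such supersolution as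
`λ < λ₁*`, this makes `s = sup Ψ / φ` finite, and `w = s φ - Ψ ≥ 0` is again a strict
supersolution of `𝓛₂ + V₂ - λ₁*`. If `w > 0` everywhere, the same domination applied to `w`
pushes `Ψ / φ` uniformly below `s` near infinity, so the supremum is attained anyway. Hence `w` has a zero, i.e. an interior minimum, where `𝓛₂ w ≥ 0` since `a₂` is
positive definite: this contradicts `(𝓛₂ + V₂ - λ₁*) w < 0`. -/

open Topology

theorem Continuous.bddAbove_range_of_eventually_le {X α : Type*} [TopologicalSpace X]
    [LinearOrder α] [TopologicalSpace α] [ClosedIciTopology α] [Nonempty α] {g : X → α}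
    (hg : Continuous g) {M : α} (h : ∀ᶠ x in cocompact X, g x ≤ M) : BddAbove (range g) := by
  obtain ⟨K, hK, hKM⟩ := mem_cocompact.1 h
  obtain ⟨M', hM'⟩ := hK.bddAbove_image hg.continuousOn
  refine ⟨max M M', ?_⟩
  rintro _ ⟨x, rfl⟩
  by_cases hx : x ∈ K
  · exact le_max_of_le_right (hM' ⟨x, hx, rfl⟩)
  · exact le_max_of_le_left (hKM hx)

theorem IsLocalMin.deriv_deriv_nonneg {f : ℝ → ℝ} {x₀ : ℝ} (hmin : IsLocalMin f x₀)
    (hc : ContinuousAt f x₀) : 0 ≤ deriv (deriv f) x₀ := by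
  by_contra! hneg
  have hmax := isLocalMax_of_deriv_deriv_neg hneg hmin.deriv_eq_zero hc
  have hconst : f =ᶠ[𝓝 x₀] fun _ => f x₀ :=
    (hmax.and hmin).mono fun x hx => le_antisymm hx.1 hx.2
  have hderiv : deriv f =ᶠ[𝓝 x₀] fun _ => 0 := by
    simpa using hconst.deriv
  simp [hderiv.deriv_eq] at hneg

theorem IsLocalMin.fderiv_fderiv_self_nonneg {E : Type*} [NormedAddCommGroup E] [NormedSpace ℝ E]
    {u : E → ℝ} {x₀ : E} (hu : ContDiff ℝ 2 u) (hmin : IsLocalMin u x₀) (ξ : E) :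
    0 ≤ fderiv ℝ (fderiv ℝ u) x₀ ξ ξ := by
  have hline : ∀ t : ℝ, HasDerivAt (fun s : ℝ => x₀ + s • ξ) ξ t := fun t => by
    simpa using ((hasDerivAt_id t).smul_const ξ).const_add x₀
  have hderiv : deriv (fun t : ℝ => u (x₀ + t • ξ)) = fun t => fderiv ℝ u (x₀ + t • ξ) ξ :=
    funext fun t => ((hu.differentiable (by norm_num) _).hasFDerivAt.comp_hasDerivAt t
      (hline t)).deriv
  have hsecond : HasDerivAt (fun t : ℝ => fderiv ℝ u (x₀ + t • ξ) ξ)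
      (fderiv ℝ (fderiv ℝ u) x₀ ξ ξ) 0 := by
    have hB := ((hu.fderiv_right (m := 1) (by norm_num)).differentiable one_ne_zero
      (x₀ + (0 : ℝ) • ξ)).hasFDerivAt.comp_hasDerivAt 0 (hline 0)
    rw [zero_smul, add_zero] at hB
    exact (ContinuousLinearMap.apply ℝ ℝ ξ).hasFDerivAt.comp_hasDerivAt 0 hB
  have hmin' : IsLocalMin (fun t : ℝ => u (x₀ + t • ξ)) 0 :=
    IsLocalMin.comp_continuous (g := fun t : ℝ => x₀ + t • ξ) (by simpa using hmin)
      (by fun_prop)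
  have := hmin'.deriv_deriv_nonneg (hu.continuous.comp (by fun_prop)).continuousAt
  rwa [hderiv, hsecond.deriv] at this

theorem Matrix.PosSemidef.sum_sum_mul_nonneg {ι : Type*} [Fintype ι] {A B : Matrix ι ι ℝ}
    (hA : A.PosSemidef) (hB : B.PosSemidef) : 0 ≤ ∑ i, ∑ j, A i j * B i j := by
  simpa [dotProduct, mulVec, Finset.mul_sum] using
    (hA.hadamard hB).dotProduct_mulVec_nonneg (fun _ => 1)

section Derivatives

variable {d : ℕ}

theorem pd2_eq_fderiv_fderiv {u : Euc d → ℝ} (hu : ContDiff ℝ 2 u) (i j : Fin d) (x : Euc d) :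
    pd2 u i j x
      = fderiv ℝ (fderiv ℝ u) x (EuclideanSpace.single i 1) (EuclideanSpace.single j 1) := by
  have hB := ((hu.fderiv_right (m := 1) (by norm_num)).differentiable one_ne_zero
    x).hasFDerivAt
  exact congrArg (· (EuclideanSpace.single i 1))
    ((ContinuousLinearMap.apply ℝ ℝ (EuclideanSpace.single j 1)).hasFDerivAt.comp x hB).fderiv

theorem posSemidef_hessian_of_isLocalMin {u : Euc d → ℝ} {x₀ : Euc d} (hu : ContDiff ℝ 2 u)
    (hmin : IsLocalMin u x₀) : (Matrix.of fun i j => pd2 u i j x₀).PosSemidef := by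
  have hsymm := (hu.contDiffAt (x := x₀)).isSymmSndFDerivAt (by simp)
  refine .of_dotProduct_mulVec_nonneg ?_ fun v => ?_
  · ext i j
    simp [pd2_eq_fderiv_fderiv hu, hsymm.eq (EuclideanSpace.single i 1)]
  · have := hmin.fderiv_fderiv_self_nonneg hu (∑ i, v i • EuclideanSpace.single i 1)
    simp [dotProduct, Matrix.mulVec, pd2_eq_fderiv_fderiv hu, Finset.mul_sum] at this ⊢
    refine this.trans_eq (Finset.sum_congr rfl fun i _ => Finset.sum_congr rfl fun j _ => ?_)
    rw [hsymm.eq]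
    ring

theorem Lop_nonneg_of_isLocalMin {a : Euc d → Matrix (Fin d) (Fin d) ℝ} {b : Euc d → Euc d}
    {u : Euc d → ℝ} {x₀ : Euc d} (ha : (a x₀).PosSemidef) (hu : ContDiff ℝ 2 u)
    (hmin : IsLocalMin u x₀) : 0 ≤ Lop a b u x₀ := by
  have hgrad : ∀ i, pd u i x₀ = 0 := fun i => by simp [pd, hmin.fderiv_eq_zero]
  simpa [Lop, hgrad] using ha.sum_sum_mul_nonneg (posSemidef_hessian_of_isLocalMin hu hmin)

theorem pd_const_mul_sub {f g : Euc d → ℝ} (hf : Differentiable ℝ f) (hg : Differentiable ℝ g)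
    (c : ℝ) (j : Fin d) :
    (fun x => pd (fun y => c * f y - g y) j x) = fun x => c * pd f j x - pd g j x := by
  ext x
  simp [pd, fderiv_fun_sub ((hf x).const_mul c) (hg x), fderiv_const_mul (hf x)]

theorem differentiable_pd {u : Euc d → ℝ} (hu : ContDiff ℝ 2 u) (j : Fin d) :
    Differentiable ℝ fun x => pd u j x := fun x =>
  ((hu.fderiv_right (m := 1) (by norm_num)).differentiable one_ne_zero x).clm_apply
    (differentiableAt_const _)

theorem Lop_const_mul_sub (a : Euc d → Matrix (Fin d) (Fin d) ℝ) (b : Euc d → Euc d)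
    {f g : Euc d → ℝ} (hf : ContDiff ℝ 2 f) (hg : ContDiff ℝ 2 g) (c : ℝ) (x : Euc d) :
    Lop a b (fun y => c * f y - g y) x = c * Lop a b f x - Lop a b g x := by
  have hpd := pd_const_mul_sub (hf.differentiable (by norm_num)) (hg.differentiable (by norm_num)) c
  have hpd2 : ∀ i j, pd2 (fun y => c * f y - g y) i j x = c * pd2 f i j x - pd2 g i j x :=
    fun i j => by
      simp only [pd2, hpd j]
      exact congrFun (pd_const_mul_sub (differentiable_pd hf j) (differentiable_pd hg j) c i) x
  simp only [Lop, hpd2, fun i => congrFun (hpd i) x, mul_sub, mul_left_comm _ c,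
    Finset.sum_sub_distrib, ← Finset.mul_sum]
  ring

end Derivatives

section MinimalGrowth

variable {d : ℕ} {a : Euc d → Matrix (Fin d) (Fin d) ℝ} {b : Euc d → Euc d}
  {W u φ Ψ : Euc d → ℝ} {C s : ℝ}

def HasMinimalGrowth (a : Euc d → Matrix (Fin d) (Fin d) ℝ) (b : Euc d → Euc d)
    (W u : Euc d → ℝ) : Prop :=
  ∀ v : Euc d → ℝ, ContDiff ℝ 2 v → (∀ x, 0 < v x) → (∀ x, Lop a b v x + W x * v x ≤ 0) →
    ∃ κ > 0, ∀ᶠ x in cocompact (Euc d), κ * u x ≤ v x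

theorem IsGroundState.hasMinimalGrowth {a₁ a₂ : Euc d → Matrix (Fin d) (Fin d) ℝ}
    {b₁ b₂ : Euc d → Euc d} {W₁ W₂ : Euc d → ℝ} (hgs : IsGroundState a₁ b₁ W₁ u univ)
    (hcoef : ∀ᶠ x in cocompact (Euc d), a₁ x = a₂ x ∧ b₁ x = b₂ x)
    (hW : ∀ᶠ x in cocompact (Euc d), W₁ x ≤ W₂ x) : HasMinimalGrowth a₂ b₂ W₂ u := by
  intro v hv hvpos hvsuper
  obtain ⟨K, hK, hKgood⟩ := mem_cocompact.1 (hcoef.and hW)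
  have hsuper₁ : ∀ x ∈ univ \ K, Lop a₁ b₁ v x + W₁ x * v x ≤ 0 := by
    rintro x ⟨-, hx⟩
    obtain ⟨⟨ha, hb⟩, hWx⟩ := hKgood hx
    have hL : Lop a₁ b₁ v x = Lop a₂ b₂ v x := by simp only [Lop, ha, hb]
    rw [hL]
    linarith [hvsuper x, mul_le_mul_of_nonneg_right hWx (hvpos x).le]
  obtain ⟨K', hK', -, -, κ, hκ, hdom⟩ := hgs.2.2.2 K hK (subset_univ K) v hv.contDiffOn
    (fun x _ => hvpos x) hsuper₁
  exact ⟨κ, hκ, mem_cocompact.2 ⟨K', hK', fun x hx => hdom x ⟨trivial, hx⟩⟩⟩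

theorem HasMinimalGrowth.bddAbove_range_div (hmg : HasMinimalGrowth a b W u)
    (hφ : ContDiff ℝ 2 φ) (hφpos : ∀ x, 0 < φ x) (hφsuper : ∀ x, Lop a b φ x + W x * φ x ≤ 0)
    (hΨ : Continuous Ψ) (hC : 0 ≤ C) (hΨle : ∀ x, Ψ x ≤ C * u x) :
    BddAbove (range fun x => Ψ x / φ x) := by
  obtain ⟨κ, hκ, hdom⟩ := hmg φ hφ hφpos hφsuper
  refine (hΨ.div hφ.continuous fun x => (hφpos x).ne').bddAbove_range_of_eventually_le
    (M := C / κ) ?_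
  filter_upwards [hdom] with x hx
  rw [Pi.div_apply, div_le_div_iff₀ (hφpos x) hκ]
  linarith [mul_le_mul_of_nonneg_left hx hC, mul_le_mul_of_nonneg_left (hΨle x) hκ.le]

theorem HasMinimalGrowth.exists_div_eq_of_isLUB (hmg : HasMinimalGrowth a b W u)
    (hφ : ContDiff ℝ 2 φ) (hφpos : ∀ x, 0 < φ x) (hΨ : ContDiff ℝ 2 Ψ) (hC : 0 < C)
    (hΨle : ∀ x, Ψ x ≤ C * u x) (hs : IsLUB (range fun x => Ψ x / φ x) s) (hspos : 0 < s)
    (hsuper : ∀ x, Lop a b (fun y => s * φ y - Ψ y) x + W x * (s * φ x - Ψ x) ≤ 0) :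
    ∃ x₀, Ψ x₀ / φ x₀ = s := by
  by_contra! hne
  have hle : ∀ x, Ψ x / φ x ≤ s := fun x => hs.1 ⟨x, rfl⟩
  have hwpos : ∀ x, 0 < s * φ x - Ψ x := fun x => by
    have := (div_lt_iff₀ (hφpos x)).1 ((hle x).lt_of_ne (hne x))
    linarith
  obtain ⟨κ, hκ, hdom⟩ := hmg _ ((contDiff_const.mul hφ).sub hΨ) hwpos hsuper
  -- near infinity, `κ u ≤ s φ - Ψ` and `Ψ ≤ C u` give `(C + κ) Ψ ≤ C s φ`
  set s' := C * s / (C + κ)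
  have hs' : s' < s := by
    rw [div_lt_iff₀ (by positivity)]
    linarith [mul_pos hκ hspos]
  have hgap : ∀ᶠ x in cocompact (Euc d), Ψ x / φ x ≤ s' := by
    filter_upwards [hdom] with x hx
    rw [div_le_iff₀ (hφpos x), div_mul_eq_mul_div, le_div_iff₀ (by positivity)]
    linarith [mul_le_mul_of_nonneg_left hx hC.le, mul_le_mul_of_nonneg_left (hΨle x) hκ.le]
  obtain ⟨_, ⟨x₁, rfl⟩, hx₁, -⟩ := hs.exists_between hs'
  obtain ⟨x₀, hx₀⟩ := (hΨ.continuous.div hφ.continuous fun x => (hφpos x).ne').exists_forall_ge'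
    x₁ (hgap.mono fun x hx => hx.trans hx₁.le)
  exact hne x₀ ((hle x₀).antisymm (hs.2 (forall_mem_range.2 hx₀)))

theorem HasMinimalGrowth.exists_nonneg_Lop_add_mul (hmg : HasMinimalGrowth a b W u)
    (ha : ∀ x, (a x).PosSemidef) (hΨ : ContDiff ℝ 2 Ψ)
    (hΨsub : ∀ x, 0 ≤ Lop a b Ψ x + W x * Ψ x) (hΨpos : ∃ x, 0 < Ψ x) (hC : 0 < C)
    (hΨle : ∀ x, Ψ x ≤ C * u x) (hφ : ContDiff ℝ 2 φ) (hφpos : ∀ x, 0 < φ x) :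
    ∃ x, 0 ≤ Lop a b φ x + W x * φ x := by
  by_contra! hstrict
  have hbdd := hmg.bddAbove_range_div hφ hφpos (fun x => (hstrict x).le) hΨ.continuous hC.le hΨle
  set s := sSup (range fun x => Ψ x / φ x)
  have hs : IsLUB (range fun x => Ψ x / φ x) s := isLUB_csSup (range_nonempty _) hbdd
  have hle : ∀ x, Ψ x ≤ s * φ x := fun x => (div_le_iff₀ (hφpos x)).1 (hs.1 ⟨x, rfl⟩)
  have hspos : 0 < s := by
    obtain ⟨x, hx⟩ := hΨpos
    exact pos_of_mul_pos_left (hx.trans_le (hle x)) (hφpos x).le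
  set w := fun y => s * φ y - Ψ y
  have hw : ContDiff ℝ 2 w := (contDiff_const.mul hφ).sub hΨ
  have hwsuper : ∀ x, Lop a b w x + W x * w x < 0 := fun x => by
    rw [Lop_const_mul_sub a b hφ hΨ]
    linarith [mul_neg_of_pos_of_neg hspos (hstrict x), hΨsub x]
  obtain ⟨x₀, hx₀⟩ := hmg.exists_div_eq_of_isLUB hφ hφpos hΨ hC hΨle hs hspos
    fun x => (hwsuper x).le
  have hw₀ : w x₀ = 0 := by
    simp only [w, ← hx₀, div_mul_cancel₀ _ (hφpos x₀).ne', sub_self]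
  have hmin : IsLocalMin w x₀ := Eventually.of_forall fun y => by
    simp only [hw₀]; linarith [hle y]
  have hneg := hwsuper x₀
  rw [hw₀, mul_zero, add_zero] at hneg
  exact hneg.not_ge (Lop_nonneg_of_isLocalMin (ha x₀) hw hmin)

end MinimalGrowth

theorem statement9_general {d : ℕ}
    (a₁ a₂ : Euc d → Matrix (Fin d) (Fin d) ℝ) (b₁ b₂ : Euc d → Euc d) (V₁ V₂ : Euc d → ℝ)
    (hstand₂ : StandingH a₂ b₂)
    (hfin₂ : lamStarFinite a₂ b₂ V₂ Set.univ)
    (hpert : ∃ K : Set (Euc d), IsCompact K ∧ ∀ x ∉ K, a₁ x = a₂ x ∧ b₁ x = b₂ x)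
    (hVord : ∃ K : Set (Euc d), IsCompact K ∧ ∀ x ∉ K, V₁ x ≤ V₂ x)
    (Ψ₁ : Euc d → ℝ)
    (hgs₁ : IsGroundState a₁ b₁ (fun x => V₁ x - lamStar a₁ b₁ V₁ Set.univ) Ψ₁ Set.univ)
    (hlam : lamStar a₂ b₂ V₂ Set.univ ≤ lamStar a₁ b₁ V₁ Set.univ)
    (Ψ : Euc d → ℝ) (hΨC2 : ContDiff ℝ 2 Ψ) (hΨplus : ∃ x, 0 < Ψ x)
    (hsub : ∀ x, lamStar a₁ b₁ V₁ Set.univ * Ψ x ≤ Lop a₂ b₂ Ψ x + V₂ x * Ψ x)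
    (C : ℝ) (hC : 0 < C) (hbound : ∀ x, max (Ψ x) 0 ≤ C * Ψ₁ x) :
    lamStar a₁ b₁ V₁ Set.univ = lamStar a₂ b₂ V₂ Set.univ := by
  set lam₁ := lamStar a₁ b₁ V₁ Set.univ
  refine le_antisymm (le_csInf hfin₂.1 ?_) hlam
  rintro lam ⟨φ, hφpos, hφC2, hφsuper⟩
  by_contra! hlt
  obtain ⟨Kp, hKp, hcoef⟩ := hpert
  obtain ⟨Kv, hKv, hV⟩ := hVord
  have hmg : HasMinimalGrowth a₂ b₂ (fun x => V₂ x - lam₁) Ψ₁ :=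
    hgs₁.hasMinimalGrowth (mem_of_superset hKp.compl_mem_cocompact hcoef)
      (mem_of_superset hKv.compl_mem_cocompact fun x hx => sub_le_sub_right (hV x hx) lam₁)
  obtain ⟨x, hx⟩ := hmg.exists_nonneg_Lop_add_mul (fun x => (hstand₂.posdef x).posSemidef) hΨC2
    (fun x => by linarith [hsub x]) hΨplus hC (fun x => (le_max_left _ _).trans (hbound x))
    (contDiffOn_univ.1 hφC2) (fun x => hφpos x trivial)
  linarith [hφsuper x trivial, mul_pos (sub_pos.2 hlt) (hφpos x trivial)]

/-- Lemma 3.2: equality of principal eigenvalues under the comparison hypotheses. -/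
theorem statement9 {d : ℕ} (hd : 1 ≤ d)
    (a₁ a₂ : Euc d → Matrix (Fin d) (Fin d) ℝ) (b₁ b₂ : Euc d → Euc d) (V₁ V₂ : Euc d → ℝ)
    (hstand₁ : StandingH a₁ b₁) (hstand₂ : StandingH a₂ b₂)
    (hV₁reg : LocallyHolder V₁) (hV₂reg : LocallyHolder V₂)
    (hV₁bdd : ∃ m, ∀ x, m ≤ V₁ x) (hV₂bdd : ∃ m, ∀ x, m ≤ V₂ x)
    (hfin₁ : lamStarFinite a₁ b₁ V₁ Set.univ) (hfin₂ : lamStarFinite a₂ b₂ V₂ Set.univ)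
    (hpert : ∃ K : Set (Euc d), IsCompact K ∧ ∀ x ∉ K, a₁ x = a₂ x ∧ b₁ x = b₂ x)
    (hVord : ∃ K : Set (Euc d), IsCompact K ∧ ∀ x ∉ K, V₁ x ≤ V₂ x)
    (hVdiff : Tendsto (fun x => V₂ x - V₁ x) (cocompact (Euc d)) (nhds 0))
    (Ψ₁ : Euc d → ℝ)
    (hgs₁ : IsGroundState a₁ b₁ (fun x => V₁ x - lamStar a₁ b₁ V₁ Set.univ) Ψ₁ Set.univ)
    (hlam : lamStar a₂ b₂ V₂ Set.univ ≤ lamStar a₁ b₁ V₁ Set.univ)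
    (Ψ : Euc d → ℝ) (hΨC2 : ContDiff ℝ 2 Ψ) (hΨplus : ∃ x, 0 < Ψ x)
    (hsub : ∀ x, lamStar a₁ b₁ V₁ Set.univ * Ψ x ≤ Lop a₂ b₂ Ψ x + V₂ x * Ψ x)
    (C : ℝ) (hC : 0 < C) (hbound : ∀ x, max (Ψ x) 0 ≤ C * Ψ₁ x) :
    lamStar a₁ b₁ V₁ Set.univ = lamStar a₂ b₂ V₂ Set.univ :=
  statement9_general a₁ a₂ b₁ b₂ V₁ V₂ hstand₂ hfin₂ hpert hVord Ψ₁ hgs₁ hlam Ψ hΨC2 hΨplus hsub C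
    hC hbound
end
end

section
/- Let d ≥ 1, let a : ℝ^d → (symmetric positive definite d×d real matrices) and b : ℝ^d → ℝ^d, and suppose there are constants M > 0, η₀ > 0, β ∈ [0,2] and R₁ > 0 such that for all |x| ≥ R₁: |⟨b(x),x⟩| ≤ M|x|^β and ⟨ξ, a(x)ξ⟩ ≥ η₀|ξ|² for all ξ ∈ ℝ^d. Let α ≥ β and let K, γ > 0 satisfy Kα > M/(2η₀) + √(M²/(4η₀²) + γ/η₀), and assume |x|^{−α} Σ_{i=1}^d a^{ii}(x) → 0 as |x| → ∞. Define Λ(x) := exp(−K|x|^α). Then there exists r₀ ≥ 1 such that for all |x| ≥ r₀: Σ_{i,j=1}^d a^{ij}(x) ∂²Λ(x)/∂x_i∂x_j + Σ_{i=1}^d b^i(x) ∂Λ(x)/∂x_i ≥ γ |x|^{2α−2} Λ(x). -/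
open Metric Set Filter

noncomputable section

/-! `Λ` is radial, `Λ(x) = F(|x|²)` with `F(s) = exp(-K s^{α/2})`, so
`𝓛Λ = 4 F''(|x|²) ⟨x, a x⟩ + 2 F'(|x|²) (tr a + ⟨b, x⟩)`. Writing `t = Kα`, this is
`Λ · [(t² |x|^{2α-4} - t(α-2) |x|^{α-4}) ⟨x, a x⟩ - t |x|^{α-2} (tr a + ⟨b, x⟩)]`.
Far out, ellipticity gives `⟨x, a x⟩ ≥ η₀|x|²`, nonnegativity of the form gives
`⟨x, a x⟩ ≤ d · tr a · |x|²`, `tr a = o(|x|^α)` and `⟨b, x⟩ ≤ M|x|^α`, so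
`𝓛Λ ≥ (η₀t² - Mt - o(1)) |x|^{2α-2} Λ`; the condition on `Kα` says exactly `η₀t² - Mt > γ`. -/

open Real Topology

section RadialDerivatives

variable {d : ℕ} {F F' : ℝ → ℝ} {F'' : ℝ} {x : Euc d}

lemma hasFDerivAt_comp_normSq {c : ℝ} (hF : HasDerivAt F c (‖x‖ ^ 2)) :
    HasFDerivAt (fun y : Euc d => F (‖y‖ ^ 2)) ((2 * c) • innerSL ℝ x) x := by
  refine (hF.comp_hasFDerivAt x (hasStrictFDerivAt_norm_sq x).hasFDerivAt).congr_fderiv ?_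
  rw [← Nat.cast_smul_eq_nsmul ℝ, smul_smul, Nat.cast_ofNat, mul_comm]

lemma pd_comp_normSq {c : ℝ} (hF : HasDerivAt F c (‖x‖ ^ 2)) (j : Fin d) :
    pd (fun y => F (‖y‖ ^ 2)) j x = 2 * c * x j := by
  simp [pd, (hasFDerivAt_comp_normSq hF).fderiv, EuclideanSpace.inner_single_right, mul_comm]

lemma pd2_comp_normSq (hF : ∀ᶠ s in 𝓝 (‖x‖ ^ 2), HasDerivAt F (F' s) s)
    (hF' : HasDerivAt F' F'' (‖x‖ ^ 2)) (i j : Fin d) :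
    pd2 (fun y => F (‖y‖ ^ 2)) i j x =
      4 * F'' * x i * x j + if i = j then 2 * F' (‖x‖ ^ 2) else 0 := by
  have hnorm : Tendsto (fun y : Euc d => ‖y‖ ^ 2) (𝓝 x) (𝓝 (‖x‖ ^ 2)) :=
    (continuous_norm.pow 2).tendsto x
  have hpd : (fun y => pd (fun z : Euc d => F (‖z‖ ^ 2)) j y)
      =ᶠ[𝓝 x] fun y => 2 * F' (‖y‖ ^ 2) * y j := by
    filter_upwards [hnorm.eventually hF] with y hy using pd_comp_normSq hy j
  have hder := ((hasFDerivAt_comp_normSq (F := F') hF').const_mul 2).mul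
    (EuclideanSpace.proj (𝕜 := ℝ) j).hasFDerivAt
  rw [pd2, hpd.fderiv_eq, HasFDerivAt.fderiv (f := fun y : Euc d => 2 * F' (‖y‖ ^ 2) * y j) hder]
  simp only [PiLp.proj_apply, add_apply, smul_apply, PiLp.single_apply, eq_comm, smul_eq_mul,
    mul_ite, mul_one, mul_zero, coe_innerSL_apply, EuclideanSpace.inner_single_right,
    ringHom_apply, one_mul]
  split_ifs <;> ring

lemma lop_comp_normSq (a : Euc d → Matrix (Fin d) (Fin d) ℝ) (b : Euc d → Euc d)
    (hF : ∀ᶠ s in 𝓝 (‖x‖ ^ 2), HasDerivAt F (F' s) s) (hF' : HasDerivAt F' F'' (‖x‖ ^ 2)) :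
    Lop a b (fun y => F (‖y‖ ^ 2)) x =
      4 * F'' * quadForm (a x) x + 2 * F' (‖x‖ ^ 2) * (∑ i, a x i i + ∑ i, b x i * x i) := by
  simp only [Lop, quadForm, pd2_comp_normSq hF hF', pd_comp_normSq hF.self_of_nhds, mul_add,
    Finset.sum_add_distrib, mul_ite, mul_zero, Finset.sum_ite_eq, Finset.mem_univ, if_true,
    Finset.mul_sum]
  rw [← add_assoc]
  congr 1
  · congr 1 <;> refine Finset.sum_congr rfl fun i _ => ?_
    · exact Finset.sum_congr rfl fun j _ => by ring
    · ring
  · exact Finset.sum_congr rfl fun i _ => by ring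

end RadialDerivatives

section QuadForm

variable {d : ℕ}

lemma quadForm_single_add_single (m : Matrix (Fin d) (Fin d) ℝ) (i j : Fin d) (σ : ℝ) :
    quadForm m (EuclideanSpace.single i 1 + EuclideanSpace.single j σ) =
      m i i + σ * (m i j + m j i) + σ ^ 2 * m j j := by
  simp only [quadForm, PiLp.add_apply, PiLp.single_apply, mul_add, add_mul, mul_ite, ite_mul,
    mul_one, mul_zero, zero_mul, Finset.sum_add_distrib, Finset.sum_ite_eq', Finset.mem_univ,
    if_true]
  ring

lemma abs_add_transpose_le_diag (m : Matrix (Fin d) (Fin d) ℝ)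
    (hm : ∀ ξ : Euc d, 0 ≤ quadForm m ξ) (i j : Fin d) :
    |m i j + m j i| ≤ m i i + m j j := by
  have hplus := hm (EuclideanSpace.single i 1 + EuclideanSpace.single j 1)
  have hminus := hm (EuclideanSpace.single i 1 + EuclideanSpace.single j (-1))
  rw [quadForm_single_add_single] at hplus hminus
  rw [abs_le]
  constructor <;> linarith

lemma quadForm_le_card_mul_trace (m : Matrix (Fin d) (Fin d) ℝ)
    (hm : ∀ ξ : Euc d, 0 ≤ quadForm m ξ) (x : Euc d) :
    quadForm m x ≤ d * (∑ i, m i i) * ‖x‖ ^ 2 := by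
  have hsymm : quadForm m x = ∑ i, ∑ j, (m i j + m j i) / 2 * (x i * x j) := by
    have hswap : ∑ i, ∑ j, m j i * x i * x j = quadForm m x := by
      rw [Finset.sum_comm]
      exact Finset.sum_congr rfl fun i _ => Finset.sum_congr rfl fun j _ => by ring
    rw [← add_halves (quadForm m x)]
    nth_rewrite 2 [← hswap]
    simp only [quadForm, ← Finset.sum_add_distrib, Finset.sum_div]
    exact Finset.sum_congr rfl fun i _ => Finset.sum_congr rfl fun j _ => by ring
  have hcoord : ∀ i j, |x i * x j| ≤ ‖x‖ ^ 2 := fun i j => by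
    rw [abs_mul, sq]
    exact mul_le_mul (PiLp.norm_apply_le x i) (PiLp.norm_apply_le x j) (abs_nonneg _)
      (norm_nonneg x)
  calc quadForm m x = ∑ i, ∑ j, (m i j + m j i) / 2 * (x i * x j) := hsymm
    _ ≤ ∑ i, ∑ j, (m i i + m j j) / 2 * ‖x‖ ^ 2 := by
      refine Finset.sum_le_sum fun i _ => Finset.sum_le_sum fun j _ => ?_
      calc (m i j + m j i) / 2 * (x i * x j) ≤ |(m i j + m j i) / 2 * (x i * x j)| :=
            le_abs_self _
        _ = |m i j + m j i| / 2 * |x i * x j| := by rw [abs_mul, abs_div, abs_two]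
        _ ≤ (m i i + m j j) / 2 * ‖x‖ ^ 2 := by
          have hdiag := abs_add_transpose_le_diag m hm i j
          have hdiag0 : 0 ≤ m i i + m j j := (abs_nonneg _).trans hdiag
          have := hcoord i j
          gcongr
    _ = d * (∑ i, m i i) * ‖x‖ ^ 2 := by
      simp only [add_div, add_mul, Finset.sum_add_distrib, Finset.sum_const, Finset.card_univ,
        Fintype.card_fin, nsmul_eq_mul, ← Finset.sum_mul, ← Finset.sum_div, ← Finset.mul_sum]
      ring

end QuadForm

section ExpNegRpow

variable (K c : ℝ) {s : ℝ}

lemma hasDerivAt_exp_neg_mul_rpow (hs : 0 < s) :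
    HasDerivAt (fun s => exp (-(K * s ^ c))) (-(K * c) * s ^ (c - 1) * exp (-(K * s ^ c))) s := by
  have hexponent : HasDerivAt (fun s => -(K * s ^ c)) (-(K * (c * s ^ (c - 1)))) s :=
    ((Real.hasDerivAt_rpow_const (Or.inl hs.ne')).const_mul K).neg
  exact hexponent.exp.congr_deriv (by ring)

lemma hasDerivAt_deriv_exp_neg_mul_rpow (hs : 0 < s) :
    HasDerivAt (fun s => -(K * c) * s ^ (c - 1) * exp (-(K * s ^ c)))
      (((K * c) ^ 2 * (s ^ (c - 1)) ^ 2 - K * c * (c - 1) * s ^ (c - 2)) * exp (-(K * s ^ c)))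
      s := by
  have hprod : HasDerivAt (fun s => -(K * c) * s ^ (c - 1) * exp (-(K * s ^ c)))
      (-(K * c) * ((c - 1) * s ^ (c - 1 - 1)) * exp (-(K * s ^ c)) +
        -(K * c) * s ^ (c - 1) * (-(K * c) * s ^ (c - 1) * exp (-(K * s ^ c)))) s :=
    ((Real.hasDerivAt_rpow_const (Or.inl hs.ne')).const_mul _).mul
      (hasDerivAt_exp_neg_mul_rpow K c hs)
  rw [show c - 1 - 1 = c - 2 by ring] at hprod
  exact hprod.congr_deriv (by ring)

end ExpNegRpow

lemma norm_sq_rpow_half {E : Type*} [SeminormedAddCommGroup E] (y : E) (p : ℝ) :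
    (‖y‖ ^ 2) ^ (p / 2) = ‖y‖ ^ p := by
  rw [← Real.rpow_natCast, ← Real.rpow_mul (norm_nonneg y)]
  congr 1
  push_cast
  ring

lemma lop_exp_neg_mul_norm_rpow {d : ℕ} (a : Euc d → Matrix (Fin d) (Fin d) ℝ)
    (b : Euc d → Euc d) (K α : ℝ) {x : Euc d} (hx : x ≠ 0) :
    Lop a b (fun y => exp (-(K * ‖y‖ ^ α))) x =
      exp (-(K * ‖x‖ ^ α)) *
        (((K * α) ^ 2 * (‖x‖ ^ (α - 2)) ^ 2 - K * α * (α - 2) * ‖x‖ ^ (α - 4)) *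
            quadForm (a x) x
          - K * α * ‖x‖ ^ (α - 2) * (∑ i, a x i i + ∑ i, b x i * x i)) := by
  have hs : 0 < ‖x‖ ^ 2 := by positivity
  have hΛ : (fun y : Euc d => exp (-(K * ‖y‖ ^ α))) =
      fun y => exp (-(K * (‖y‖ ^ 2) ^ (α / 2))) := by
    simp only [norm_sq_rpow_half]
  rw [hΛ, lop_comp_normSq a b
    ((lt_mem_nhds hs).mono fun s hs => hasDerivAt_exp_neg_mul_rpow K (α / 2) hs)
    (hasDerivAt_deriv_exp_neg_mul_rpow K (α / 2) hs)]
  rw [show α / 2 - 1 = (α - 2) / 2 by ring, show α / 2 - 2 = (α - 4) / 2 by ring]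
  simp only [norm_sq_rpow_half]
  ring

lemma exists_one_le_forall_of_eventually_cocompact {E : Type*} [SeminormedAddCommGroup E]
    [ProperSpace E] {P : E → Prop} (h : ∀ᶠ x in cocompact E, P x) :
    ∃ r₀ : ℝ, 1 ≤ r₀ ∧ ∀ x : E, r₀ ≤ ‖x‖ → P x := by
  rw [← Metric.cobounded_eq_cocompact, ← comap_norm_atTop, eventually_comap] at h
  obtain ⟨R, hR⟩ := h.exists_forall_of_atTop
  exact ⟨max 1 R, le_max_left 1 R, fun x hx => hR ‖x‖ ((le_max_right 1 R).trans hx) x rfl⟩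

lemma pos_and_lt_of_root_lt {η M γ t : ℝ} (hη : 0 < η) (hM : 0 ≤ M)
    (ht : M / (2 * η) + √(M ^ 2 / (4 * η ^ 2) + γ / η) < t) :
    0 < t ∧ γ < η * t ^ 2 - M * t := by
  set c := M / (2 * η)
  have hc : 2 * η * c = M := mul_div_cancel₀ M (by positivity)
  have hc2 : M ^ 2 / (4 * η ^ 2) = c ^ 2 := by rw [div_pow]; ring
  have hroot : 0 < t - c := by linarith [Real.sqrt_nonneg (M ^ 2 / (4 * η ^ 2) + γ / η)]
  have hsq := (Real.sqrt_lt' hroot).1 (by linarith)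
  refine ⟨by linarith [show 0 ≤ c by positivity], ?_⟩
  calc γ < ((t - c) ^ 2 - c ^ 2) * η := (div_lt_iff₀ hη).1 (by linarith)
    _ = η * t ^ 2 - M * t := by rw [← hc]; ring

lemma exp_neg_mul_norm_rpow_mul_le_lop {d : ℕ} {a : Euc d → Matrix (Fin d) (Fin d) ℝ}
    {b : Euc d → Euc d} {x : Euc d} {α β K M η₀ ε : ℝ} (hη : 0 ≤ η₀) (hM : 0 ≤ M)
    (hαβ : β ≤ α) (ht : 0 ≤ K * α) (hx : 1 ≤ ‖x‖)
    (ha : ∀ ξ : Euc d, η₀ * ‖ξ‖ ^ 2 ≤ quadForm (a x) ξ)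
    (hb : |∑ i, b x i * x i| ≤ M * ‖x‖ ^ β) (hT : ∑ i, a x i i ≤ ε * ‖x‖ ^ α) :
    (η₀ * (K * α) ^ 2 - M * (K * α) - ε * (K * α) * (|α - 2| * d + 1)) * ‖x‖ ^ (2 * α - 2) *
        exp (-(K * ‖x‖ ^ α)) ≤ Lop a b (fun y => exp (-(K * ‖y‖ ^ α))) x := by
  have hr : 0 < ‖x‖ := one_pos.trans_le hx
  rw [lop_exp_neg_mul_norm_rpow a b K α (norm_pos_iff.1 hr)]
  have hw : ‖x‖ ^ (α - 4) * ‖x‖ ^ 2 = ‖x‖ ^ (α - 2) := by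
    rw [← Real.rpow_add_natCast hr.ne']; ring_nf
  have hrα : ‖x‖ ^ α = ‖x‖ ^ (α - 2) * ‖x‖ ^ 2 := by
    rw [← Real.rpow_add_natCast hr.ne']; ring_nf
  have hr2α : ‖x‖ ^ (2 * α - 2) = (‖x‖ ^ (α - 2)) ^ 2 * ‖x‖ ^ 2 := by
    rw [sq, mul_assoc, ← hrα, ← Real.rpow_add hr]; ring_nf
  have hQ0 : ∀ ξ, 0 ≤ quadForm (a x) ξ := fun ξ => (mul_nonneg hη (sq_nonneg _)).trans (ha ξ)
  have hQT := quadForm_le_card_mul_trace (a x) hQ0 x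
  have hB : ∑ i, b x i * x i ≤ M * ‖x‖ ^ α :=
    (le_abs_self _).trans (hb.trans (mul_le_mul_of_nonneg_left
      (Real.rpow_le_rpow_of_exponent_le hx hαβ) hM))
  rw [hr2α]
  rw [hrα] at hT hB
  set t := K * α
  set r := ‖x‖
  set p := r ^ (α - 2)
  set w := r ^ (α - 4)
  set Q := quadForm (a x) x
  set T := ∑ i, a x i i
  set B := ∑ i, b x i * x i
  have hp : 0 ≤ p := by positivity
  have hcurv : t * (α - 2) * w * Q ≤ ε * t * |α - 2| * d * (p ^ 2 * r ^ 2) := calc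
    t * (α - 2) * w * Q ≤ t * |α - 2| * w * Q := by
      have := hQ0 x
      gcongr
      exact le_abs_self _
    _ ≤ t * |α - 2| * w * (d * (ε * (p * r ^ 2)) * r ^ 2) := by
      gcongr
      exact hQT.trans (by gcongr)
    _ = ε * t * |α - 2| * d * (p ^ 2 * r ^ 2) := by rw [← hw]; ring
  have key : (η₀ * t ^ 2 - M * t - ε * t * (|α - 2| * d + 1)) * (p ^ 2 * r ^ 2) ≤
      (t ^ 2 * p ^ 2 - t * (α - 2) * w) * Q - t * p * (T + B) := by
    linarith [mul_le_mul_of_nonneg_left (ha x) (by positivity : 0 ≤ t ^ 2 * p ^ 2),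
      mul_le_mul_of_nonneg_left hT (mul_nonneg ht hp),
      mul_le_mul_of_nonneg_left hB (mul_nonneg ht hp)]
  rw [mul_comm _ (exp _)]
  exact mul_le_mul_of_nonneg_left key (exp_pos _).le

theorem statement11_general {d : ℕ}
    (a : Euc d → Matrix (Fin d) (Fin d) ℝ) (b : Euc d → Euc d)
    (M η₀ β : ℝ) (hM : 0 < M) (hη : 0 < η₀)
    (R₁ : ℝ)
    (hb : ∀ x : Euc d, R₁ ≤ ‖x‖ → |∑ i, b x i * x i| ≤ M * ‖x‖ ^ β)
    (ha : ∀ x : Euc d, R₁ ≤ ‖x‖ → ∀ ξ : Euc d, η₀ * ‖ξ‖ ^ 2 ≤ quadForm (a x) ξ)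
    (α : ℝ) (hα : β ≤ α) (K γ : ℝ)
    (hKα : M / (2 * η₀) + Real.sqrt (M ^ 2 / (4 * η₀ ^ 2) + γ / η₀) < K * α)
    (htrace : Tendsto (fun x : Euc d => (∑ i, a x i i) / ‖x‖ ^ α)
      (cocompact (Euc d)) (nhds 0)) :
    ∃ r₀ : ℝ, 1 ≤ r₀ ∧ ∀ x : Euc d, r₀ ≤ ‖x‖ →
      γ * ‖x‖ ^ (2 * α - 2) * Real.exp (-(K * ‖x‖ ^ α)) ≤
        Lop a b (fun y => Real.exp (-(K * ‖y‖ ^ α))) x := by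
  obtain ⟨ht, hγ⟩ := pos_and_lt_of_root_lt hη hM.le hKα
  set ε := (η₀ * (K * α) ^ 2 - M * (K * α) - γ) / (K * α * (|α - 2| * d + 1))
  have hε : 0 < ε := div_pos (by linarith) (by positivity)
  have hγε : γ = η₀ * (K * α) ^ 2 - M * (K * α) - ε * (K * α) * (|α - 2| * d + 1) := by
    have hεmul : ε * (K * α * (|α - 2| * d + 1)) = η₀ * (K * α) ^ 2 - M * (K * α) - γ :=
      div_mul_cancel₀ _ (by positivity)
    linarith
  have hfar : ∀ᶠ x in cocompact (Euc d), (∑ i, a x i i) / ‖x‖ ^ α < ε ∧ R₁ ≤ ‖x‖ :=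
    (htrace.eventually (gt_mem_nhds hε)).and
      (tendsto_norm_cocompact_atTop.eventually_ge_atTop R₁)
  obtain ⟨r₀, hr₀, hfar⟩ := exists_one_le_forall_of_eventually_cocompact hfar
  refine ⟨r₀, hr₀, fun x hx => ?_⟩
  obtain ⟨hT, hR₁⟩ := hfar x hx
  have hx1 : 1 ≤ ‖x‖ := hr₀.trans hx
  rw [hγε]
  exact exp_neg_mul_norm_rpow_mul_le_lop hη.le hM.le hα ht.le hx1 (ha x hR₁) (hb x hR₁)
    ((div_lt_iff₀ (Real.rpow_pos_of_pos (one_pos.trans_le hx1) α)).1 hT).le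

/-- Lemma 4.1 (differential inequality part): `𝓛Λ ≥ γ|x|^{2α-2}Λ` for large `|x|`, where
`Λ(x) = exp(-K|x|^α)`. -/
theorem statement11 {d : ℕ} (hd : 1 ≤ d)
    (a : Euc d → Matrix (Fin d) (Fin d) ℝ) (b : Euc d → Euc d)
    (hposdef : ∀ x, (a x).PosDef)
    (M η₀ β : ℝ) (hM : 0 < M) (hη : 0 < η₀) (hβ0 : 0 ≤ β) (hβ2 : β ≤ 2)
    (R₁ : ℝ) (hR₁ : 0 < R₁)
    (hb : ∀ x : Euc d, R₁ ≤ ‖x‖ → |∑ i, b x i * x i| ≤ M * ‖x‖ ^ β)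
    (ha : ∀ x : Euc d, R₁ ≤ ‖x‖ → ∀ ξ : Euc d, η₀ * ‖ξ‖ ^ 2 ≤ quadForm (a x) ξ)
    (α : ℝ) (hα : β ≤ α) (K γ : ℝ) (hK : 0 < K) (hγ : 0 < γ)
    (hKα : M / (2 * η₀) + Real.sqrt (M ^ 2 / (4 * η₀ ^ 2) + γ / η₀) < K * α)
    (htrace : Tendsto (fun x : Euc d => (∑ i, a x i i) / ‖x‖ ^ α)
      (cocompact (Euc d)) (nhds 0)) :
    ∃ r₀ : ℝ, 1 ≤ r₀ ∧ ∀ x : Euc d, r₀ ≤ ‖x‖ →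
      γ * ‖x‖ ^ (2 * α - 2) * Real.exp (-(K * ‖x‖ ^ α)) ≤
        Lop a b (fun y => Real.exp (-(K * ‖y‖ ^ α))) x :=
  statement11_general a b M η₀ β hM hη R₁ hb ha α hα K γ hKα htrace
end
end
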